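/- arXiv:0812.0329 — 3 statements merged into one kernel-verified Lean document; each statement's English description precedes it below -/
import Mathlib

section
/- Let Φ and Ψ be two N×N unitary matrices partitioned into M = N/d column-blocks of size N×d. Then the block-coherence μ_B(Φ,Ψ) = max_{ℓ,r} (1/d)ρ(Φ[ℓ]^H Ψ[r]) satisfies μ_B(Φ,Ψ) ≥ 1/√(dN). -/
open Matrix

noncomputable def rho {m n : Type*} [Fintype m] [Fintype n] [DecidableEq n]
    (A : Matrix m n ℂ) : ℝ :=
  ‖LinearMap.toContinuousLinearMap (Matrix.toEuclideanLin A)‖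

noncomputable def enorm {n : Type*} [Fintype n] (v : n → ℂ) : ℝ :=
  Real.sqrt (∑ i, ‖v i‖ ^ 2)

def blk {α β γ : Type*} (D : Matrix α (β × γ) ℂ) (ℓ : β) : Matrix α γ ℂ :=
  Matrix.of fun i j => D i (ℓ, j)

def blk2 {ι κ d₁ d₂ : Type*} (A : Matrix (ι × d₁) (κ × d₂) ℂ) (ℓ : ι) (r : κ) :
    Matrix d₁ d₂ ℂ :=
  Matrix.of fun i j => A (ℓ, i) (r, j)

noncomputable def rhoc {ι κ d : Type*} [Fintype ι] [Fintype κ] [Fintype d] [DecidableEq d]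
    (A : Matrix (ι × d) (κ × d) ℂ) : ℝ :=
  ⨆ r : κ, ∑ ℓ : ι, rho (blk2 A ℓ r)

noncomputable def vnorm1 {ι d : Type*} [Fintype ι] [Fintype d] (v : ι × d → ℂ) : ℝ :=
  ∑ ℓ : ι, enorm (fun j => v (ℓ, j))

noncomputable def vnormInf {ι d : Type*} [Fintype ι] [Fintype d] (v : ι × d → ℂ) : ℝ :=
  ⨆ ℓ : ι, enorm (fun j => v (ℓ, j))

noncomputable def pinv {α n : Type*} [Fintype α] [Fintype n] [DecidableEq n]
    (B : Matrix α n ℂ) : Matrix n α ℂ :=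
  (Bᴴ * B)⁻¹ * Bᴴ

noncomputable def muB2 {M d : ℕ} (Φ Ψ : Matrix (Fin M × Fin d) (Fin M × Fin d) ℂ) : ℝ :=
  ⨆ p : Fin M × Fin M, (1 / (d : ℝ)) * rho ((blk Φ p.1)ᴴ * blk Ψ p.2)

/-! The Gram matrix `G = Φᴴ * Ψ` is unitary, so its squared Frobenius norm is `N = M * d`.
Its `d × d` blocks are `Φ[ℓ]ᴴ * Ψ[r]`, and a block `B` has squared Frobenius norm at most
`d * ρ(B)^2 ≤ d * (d * μ_B)^2`. Summing over the `M^2` blocks gives `M * d ≤ M^2 * d^3 * μ_B^2`. -/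

section

variable {m n : Type*} [Fintype m] [Fintype n] [DecidableEq n]

lemma sum_norm_sq_le_rho_sq (A : Matrix m n ℂ) (j : n) : ∑ i, ‖A i j‖ ^ 2 ≤ rho A ^ 2 := by
  set f := LinearMap.toContinuousLinearMap (toEuclideanLin A)
  have hcol : ‖f (EuclideanSpace.single j 1)‖ ^ 2 = ∑ i, ‖A i j‖ ^ 2 := by
    simp [f, EuclideanSpace.norm_sq_eq, mulVec_single]
  have hle : ‖f (EuclideanSpace.single j 1)‖ ≤ rho A :=
    (f.le_opNorm _).trans_eq (by simp [f, rho])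
  exact hcol ▸ pow_le_pow_left₀ (norm_nonneg _) hle 2

lemma sum_sum_norm_sq_le_card_mul_rho_sq (A : Matrix m n ℂ) :
    ∑ j, ∑ i, ‖A i j‖ ^ 2 ≤ Fintype.card n * rho A ^ 2 := by
  simpa using Finset.sum_le_sum fun j (_ : j ∈ Finset.univ) => sum_norm_sq_le_rho_sq A j

lemma sum_norm_sq_eq_one_of_conjTranspose_mul_self_eq_one {G : Matrix n n ℂ} (hG : Gᴴ * G = 1)
    (q : n) : ∑ p, ‖G p q‖ ^ 2 = 1 := by
  have h := congr_fun₂ hG q q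
  simp only [mul_apply, conjTranspose_apply, one_apply_eq, RCLike.star_def, RCLike.conj_mul] at h
  norm_cast at h
  exact Complex.ofReal_eq_one.mp h

lemma sum_sum_norm_sq_eq_card_of_mem_unitaryGroup {G : Matrix n n ℂ}
    (hG : G ∈ unitaryGroup n ℂ) : ∑ q, ∑ p, ‖G p q‖ ^ 2 = Fintype.card n := by
  simp [sum_norm_sq_eq_one_of_conjTranspose_mul_self_eq_one hG.1]

end

lemma blk2_conjTranspose_mul {α β γ δ : Type*} [Fintype α] (D : Matrix α (β × γ) ℂ)
    (E : Matrix α (β × δ) ℂ) (ℓ r : β) : blk2 (Dᴴ * E) ℓ r = (blk D ℓ)ᴴ * blk E r := by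
  ext i j
  simp [blk2, blk, mul_apply]

lemma sum_sum_norm_sq_le_card_mul_sum_rho_blk2_sq {ι κ d₁ d₂ : Type*} [Fintype ι] [Fintype κ]
    [Fintype d₁] [Fintype d₂] [DecidableEq d₂] (A : Matrix (ι × d₁) (κ × d₂) ℂ) :
    ∑ q, ∑ p, ‖A p q‖ ^ 2 ≤ Fintype.card d₂ * ∑ r, ∑ ℓ, rho (blk2 A ℓ r) ^ 2 := by
  have hsplit : ∑ q, ∑ p, ‖A p q‖ ^ 2 = ∑ r, ∑ ℓ, ∑ j, ∑ i, ‖blk2 A ℓ r i j‖ ^ 2 := by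
    simp only [Fintype.sum_prod_type]
    exact Finset.sum_congr rfl fun r _ => Finset.sum_comm
  simp only [hsplit, Finset.mul_sum]
  gcongr with r _ ℓ _
  exact sum_sum_norm_sq_le_card_mul_rho_sq _

lemma muB2_nonneg {M d : ℕ} (Φ Ψ : Matrix (Fin M × Fin d) (Fin M × Fin d) ℂ) :
    0 ≤ muB2 Φ Ψ :=
  Real.iSup_nonneg fun _ => mul_nonneg (by positivity) (norm_nonneg _)

lemma rho_le_mul_muB2 {M d : ℕ} (hd : 0 < d) (Φ Ψ : Matrix (Fin M × Fin d) (Fin M × Fin d) ℂ)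
    (ℓ r : Fin M) : rho ((blk Φ ℓ)ᴴ * blk Ψ r) ≤ d * muB2 Φ Ψ := by
  have hle : (1 / (d : ℝ)) * rho ((blk Φ ℓ)ᴴ * blk Ψ r) ≤ muB2 Φ Ψ :=
    le_ciSup (f := fun p : Fin M × Fin M => (1 / (d : ℝ)) * rho ((blk Φ p.1)ᴴ * blk Ψ p.2))
      (Set.finite_range _).bddAbove (ℓ, r)
  rwa [one_div, inv_mul_le_iff₀ (by positivity)] at hle

lemma one_div_sqrt_le_of_one_le_mul_sq {x μ : ℝ} (hμ : 0 ≤ μ) (h : 1 ≤ x * μ ^ 2) :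
    1 / Real.sqrt x ≤ μ := by
  have hx : 0 < x := by
    by_contra! hx
    nlinarith [mul_nonpos_of_nonpos_of_nonneg hx (sq_nonneg μ)]
  rw [div_le_iff₀ (Real.sqrt_pos.mpr hx), ← Real.sqrt_sq hμ, ← Real.sqrt_mul (sq_nonneg μ)]
  exact Real.one_le_sqrt.mpr (by linarith)

theorem block_coherence_lower_bound (M d : ℕ) (hM : 0 < M) (hd : 0 < d)
    (Φ Ψ : Matrix (Fin M × Fin d) (Fin M × Fin d) ℂ)
    (hΦ : Φ ∈ Matrix.unitaryGroup (Fin M × Fin d) ℂ)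
    (hΨ : Ψ ∈ Matrix.unitaryGroup (Fin M × Fin d) ℂ) :
    muB2 Φ Ψ ≥ 1 / Real.sqrt ((d : ℝ) * (M * d)) := by
  set μ := muB2 Φ Ψ
  have hG : Φᴴ * Ψ ∈ unitaryGroup (Fin M × Fin d) ℂ :=
    Submonoid.mul_mem _ (Unitary.star_mem hΦ) hΨ
  have hblock : ∀ ℓ r, rho (blk2 (Φᴴ * Ψ) ℓ r) ≤ d * μ := fun ℓ r =>
    blk2_conjTranspose_mul Φ Ψ ℓ r ▸ rho_le_mul_muB2 hd Φ Ψ ℓ r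
  have hN : (M * d : ℝ) ≤ M * d * ((d * (M * d)) * μ ^ 2) :=
    calc (M * d : ℝ) = ∑ q, ∑ p, ‖(Φᴴ * Ψ) p q‖ ^ 2 := by
          simp [sum_sum_norm_sq_eq_card_of_mem_unitaryGroup hG]
      _ ≤ d * ∑ r, ∑ ℓ, rho (blk2 (Φᴴ * Ψ) ℓ r) ^ 2 := by
          simpa using sum_sum_norm_sq_le_card_mul_sum_rho_blk2_sq (Φᴴ * Ψ)
      _ ≤ d * ∑ _r : Fin M, ∑ _ℓ : Fin M, (d * μ) ^ 2 := by
          gcongr with r _ ℓ _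
          exacts [norm_nonneg _, hblock ℓ r]
      _ = M * d * ((d * (M * d)) * μ ^ 2) := by
          simp only [Finset.sum_const, Finset.card_univ, Fintype.card_fin, nsmul_eq_mul]
          ring
  exact one_div_sqrt_le_of_one_le_mul_sq (muB2_nonneg Φ Ψ)
    (le_of_mul_le_mul_left (by simpa using hN) (by positivity))
end

section
/- Let F be the M×M DFT matrix with entries F_{ℓ,r} = (1/√M) exp(2πi ℓ r / M), let U be an arbitrary d×d unitary matrix, and set Φ = I_N (N = Md) and Ψ = F ⊗ U. Then Φ and Ψ are unitary and their block-coherence equals the minimal possible value: μ_B(Φ,Ψ) = 1/√(dN). -/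
open Matrix

noncomputable def dftMatrix (M : ℕ) : Matrix (Fin M) (Fin M) ℂ :=
  Matrix.of fun ℓ r =>
    ((1 / Real.sqrt M : ℝ) : ℂ) *
      Complex.exp (2 * Real.pi * Complex.I * (ℓ.val : ℂ) * (r.val : ℂ) / (M : ℂ))

/-!
Every `d × d` block of `Iᴴ (F ⊗ U)` is `F ℓ r • U`, whose spectral norm is `|F ℓ r| = 1 / √M`
because `U` is unitary. Unitarity of `F` is the orthogonality of the `M`-th roots of unity:
for `ℓ ≠ r`, `exp (2πi (ℓ - r) / M)` is an `M`-th root of unity different from `1`.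
-/

open Complex

open scoped Real Matrix.Norms.L2Operator

-- `rho` is by definition the norm of `Matrix.Norms.L2Operator`.
section Rho

variable {m n : Type*} [Fintype m] [Fintype n] [DecidableEq n]

theorem rho_smul (c : ℂ) (A : Matrix m n ℂ) : rho (c • A) = ‖c‖ * rho A :=
  norm_smul c A

theorem rho_of_mem_unitaryGroup [Nonempty n] {U : Matrix n n ℂ}
    (hU : U ∈ unitaryGroup n ℂ) : rho U = 1 :=
  (CStarRing.norm_of_mem_unitary hU : ‖U‖ = 1)

end Rho

theorem conjTranspose_blk_one_mul_blk_kronecker {ι κ δ ε : Type*} [Fintype ι] [Fintype δ]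
    [DecidableEq ι] [DecidableEq δ] (A : Matrix ι κ ℂ) (B : Matrix δ ε ℂ) (ℓ : ι) (r : κ) :
    (blk (1 : Matrix (ι × δ) (ι × δ) ℂ) ℓ)ᴴ * blk (kroneckerMap (· * ·) A B) r = A ℓ r • B := by
  ext j k
  simp [mul_apply, blk, one_apply, Fintype.sum_prod_type, Prod.ext_iff, ite_and,
    apply_ite (starRingEnd ℂ), ite_mul]

theorem norm_dftMatrix_apply (M : ℕ) (ℓ r : Fin M) : ‖dftMatrix M ℓ r‖ = 1 / √M := by
  have harg : 2 * π * I * (ℓ.val : ℂ) * (r.val : ℂ) / (M : ℂ)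
      = ((2 * π * ℓ.val * r.val / M : ℝ) : ℂ) * I := by
    push_cast; ring
  rw [dftMatrix, of_apply, norm_mul, harg, norm_exp_ofReal_mul_I, mul_one, norm_real,
    Real.norm_of_nonneg (by positivity)]

theorem sum_range_exp_pow_eq_zero {M : ℕ} {n : ℤ} (hn : ¬ (M : ℤ) ∣ n) :
    ∑ k ∈ Finset.range M, exp (2 * π * I * n / M) ^ k = 0 := by
  obtain rfl | hM := eq_or_ne M 0
  · simp
  have hζ := isPrimitiveRoot_exp M hM
  have hw : exp (2 * π * I * n / M) = exp (2 * π * I / M) ^ n := by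
    rw [← exp_int_mul]; congr 1; ring
  have hw1 : exp (2 * π * I / M) ^ n ≠ 1 := by rwa [Ne, hζ.zpow_eq_one_iff_dvd]
  rw [hw, geom_sum_eq hw1, ← zpow_natCast, ← _root_.zpow_mul, mul_comm n, _root_.zpow_mul,
    zpow_natCast, hζ.pow_eq_one, _root_.one_zpow, sub_self, zero_div]

theorem Fin.not_natCast_dvd_sub {M : ℕ} {ℓ r : Fin M} (h : ℓ ≠ r) :
    ¬ (M : ℤ) ∣ (ℓ : ℤ) - r := by
  intro hdvd
  have := Int.eq_zero_of_abs_lt_dvd hdvd (by rw [abs_lt]; omega)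
  omega

theorem dftMatrix_mul_star_apply (M : ℕ) (ℓ r k : Fin M) :
    dftMatrix M ℓ k * star (dftMatrix M r k)
      = (M : ℂ)⁻¹ * exp (2 * π * I * ((ℓ : ℤ) - r : ℤ) / M) ^ (k : ℕ) := by
  simp only [dftMatrix, of_apply, star_mul', Complex.star_def, conj_ofReal, ← exp_conj,
    ← exp_nat_mul, map_div₀, map_mul, conj_I, map_ofNat, map_natCast]
  rw [mul_mul_mul_comm, ← exp_add, ← ofReal_mul, div_mul_div_comm, one_mul,
    Real.mul_self_sqrt M.cast_nonneg]
  congr 1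
  · push_cast; ring
  · congr 1; push_cast; ring

theorem dftMatrix_mem_unitaryGroup {M : ℕ} (hM : M ≠ 0) :
    dftMatrix M ∈ unitaryGroup (Fin M) ℂ := by
  rw [mem_unitaryGroup_iff]
  ext ℓ r
  simp only [mul_apply, star_apply, dftMatrix_mul_star_apply, ← Finset.mul_sum]
  rw [Fin.sum_univ_eq_sum_range (fun k => exp (2 * π * I * ((ℓ : ℤ) - r : ℤ) / M) ^ k) M]
  obtain rfl | hne := eq_or_ne ℓ r
  · simp [hM]
  · rw [sum_range_exp_pow_eq_zero (Fin.not_natCast_dvd_sub hne), mul_zero, one_apply_ne hne]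

theorem dft_kron_unitary_achieves_min_block_coherence (M d : ℕ) (hM : 0 < M) (hd : 0 < d)
    (U : Matrix (Fin d) (Fin d) ℂ) (hU : U ∈ Matrix.unitaryGroup (Fin d) ℂ) :
    (1 : Matrix (Fin M × Fin d) (Fin M × Fin d) ℂ) ∈ Matrix.unitaryGroup (Fin M × Fin d) ℂ ∧
    Matrix.kroneckerMap (· * ·) (dftMatrix M) U ∈ Matrix.unitaryGroup (Fin M × Fin d) ℂ ∧
    muB2 (1 : Matrix (Fin M × Fin d) (Fin M × Fin d) ℂ)
        (Matrix.kroneckerMap (· * ·) (dftMatrix M) U)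
      = 1 / Real.sqrt ((d : ℝ) * (M * d)) := by
  refine ⟨one_mem _, kronecker_mem_unitary (dftMatrix_mem_unitaryGroup hM.ne') hU, ?_⟩
  have : Nonempty (Fin M) := ⟨⟨0, hM⟩⟩
  have : Nonempty (Fin d) := ⟨⟨0, hd⟩⟩
  have hblock (p : Fin M × Fin M) :
      1 / (d : ℝ) * rho ((blk (1 : Matrix (Fin M × Fin d) (Fin M × Fin d) ℂ) p.1)ᴴ *
        blk (kroneckerMap (· * ·) (dftMatrix M) U) p.2) = 1 / (d * √M) := by
    rw [conjTranspose_blk_one_mul_blk_kronecker, rho_smul, norm_dftMatrix_apply,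
      rho_of_mem_unitaryGroup hU, mul_one, div_mul_div_comm, one_mul]
  rw [muB2, iSup_congr hblock, ciSup_const, show (d : ℝ) * (M * d) = d ^ 2 * M by ring,
    Real.sqrt_mul (by positivity), Real.sqrt_sq (by positivity)]
end

section
/- (Theorem 3, coherence condition implies exact recovery condition) Let D ∈ ℂ^{L×N} have column-blocks D[ℓ] of size L×d with D[ℓ]^H D[ℓ] = I_d for all ℓ, and block-coherence μ_B = max_{ℓ≠r}(1/d)ρ(D[ℓ]^H D[r]). If kd < (μ_B^{-1} + d)/2, then for every submatrix D_0 consisting of k of the blocks (with D̄_0 the remaining blocks), ρ_c(D_0^† D̄_0) < 1. -/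
open Matrix

noncomputable def muB {L M d : ℕ} (D : Matrix (Fin L) (Fin M × Fin d) ℂ) : ℝ :=
  ⨆ p : {p : Fin M × Fin M // p.1 ≠ p.2},
    (1 / (d : ℝ)) * rho ((blk D p.val.1)ᴴ * blk D p.val.2)

/-! Write `D₀ᴴ D₀ = 1 + H`. Orthonormality of the blocks makes the diagonal blocks of `H`
vanish, and block coherence bounds every other block of `H` and every block of `D₀ᴴ D̄₀` by
`d μ_B`, so `ρ_c(H) ≤ (k - 1) d μ_B` and `ρ_c(D₀ᴴ D̄₀) ≤ k d μ_B`. Since `ρ_c` is the operator norm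
induced by the block `ℓ¹` norm (sum of the Euclidean norms of the blocks), it is submultiplicative,
and `ρ_c(H) < 1` makes `1 + H` invertible with `ρ_c((1 + H)⁻¹) ≤ 1 / (1 - ρ_c(H))`. Hence
`ρ_c(D₀^† D̄₀) ≤ k d μ_B / (1 - (k - 1) d μ_B)`, which is `< 1` exactly when
`(2k - 1) d μ_B < 1`, i.e. when `k d < (μ_B⁻¹ + d) / 2`. -/

open scoped Matrix.Norms.L2Operator

theorem enorm_eq_norm_toLp {n : Type*} [Fintype n] (v : n → ℂ) :
    _root_.enorm v = ‖WithLp.toLp 2 v‖ :=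
  (EuclideanSpace.norm_eq _).symm

section OperatorNorm

variable {m n l : Type*} [Fintype m] [Fintype n] [Fintype l] [DecidableEq n] [DecidableEq l]

theorem rho_eq_l2_opNorm (A : Matrix m n ℂ) : rho A = ‖A‖ := rfl

theorem rho_nonneg (A : Matrix m n ℂ) : 0 ≤ rho A := norm_nonneg A

theorem rho_zero : rho (0 : Matrix m n ℂ) = 0 := by
  rw [rho_eq_l2_opNorm, norm_zero]

theorem rho_sub_le (A B : Matrix m n ℂ) : rho (A - B) ≤ rho A + rho B := norm_sub_le A B

theorem rho_sum_le {κ : Type*} (s : Finset κ) (f : κ → Matrix m n ℂ) :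
    rho (∑ t ∈ s, f t) ≤ ∑ t ∈ s, rho (f t) :=
  norm_sum_le s f

theorem rho_mul_le (A : Matrix m n ℂ) (B : Matrix n l ℂ) : rho (A * B) ≤ rho A * rho B :=
  Matrix.l2_opNorm_mul A B

theorem rho_one_le : rho (1 : Matrix n n ℂ) ≤ 1 := by
  have h := Matrix.l2_opNorm_conjTranspose_mul_self (1 : Matrix n n ℂ)
  rw [Matrix.conjTranspose_one, one_mul, ← rho_eq_l2_opNorm] at h
  nlinarith [rho_nonneg (1 : Matrix n n ℂ)]

theorem enorm_mulVec_le (A : Matrix m n ℂ) (v : n → ℂ) :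
    _root_.enorm (A *ᵥ v) ≤ rho A * _root_.enorm v := by
  rw [enorm_eq_norm_toLp, enorm_eq_norm_toLp]
  exact Matrix.l2_opNorm_mulVec A (WithLp.toLp 2 v)

end OperatorNorm

theorem blk2_mul {ι κ τ d : Type*} [Fintype τ] [Fintype d] (X : Matrix (ι × d) (τ × d) ℂ)
    (Y : Matrix (τ × d) (κ × d) ℂ) (ℓ : ι) (r : κ) :
    blk2 (X * Y) ℓ r = ∑ t : τ, blk2 X ℓ t * blk2 Y t r := by
  ext i j
  simp [blk2, Matrix.mul_apply, Matrix.sum_apply, Fintype.sum_prod_type]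

theorem blk2_sub {ι κ d : Type*} (X Y : Matrix (ι × d) (κ × d) ℂ) (ℓ : ι) (r : κ) :
    blk2 (X - Y) ℓ r = blk2 X ℓ r - blk2 Y ℓ r := rfl

theorem blk2_one {ι d : Type*} [DecidableEq ι] [DecidableEq d] (ℓ r : ι) :
    blk2 (1 : Matrix (ι × d) (ι × d) ℂ) ℓ r = if ℓ = r then 1 else 0 := by
  ext i j
  by_cases h : ℓ = r <;> simp [blk2, Matrix.one_apply, h]

section BlockVectorNorm

variable {ι d : Type*} [Fintype ι] [Fintype d]

theorem vnorm1_nonneg (v : ι × d → ℂ) : 0 ≤ vnorm1 v :=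
  Finset.sum_nonneg fun _ _ => Real.sqrt_nonneg _

theorem vnorm1_eq_zero {v : ι × d → ℂ} (h : vnorm1 v = 0) : v = 0 := by
  simp only [vnorm1, enorm_eq_norm_toLp] at h
  rw [Finset.sum_eq_zero_iff_of_nonneg fun _ _ => norm_nonneg _] at h
  funext ⟨ℓ, j⟩
  exact congrFun ((WithLp.toLp_eq_zero _).mp (norm_eq_zero.mp (h ℓ (Finset.mem_univ ℓ)))) j

theorem vnorm1_neg (v : ι × d → ℂ) : vnorm1 (-v) = vnorm1 v := by
  simp only [vnorm1, enorm_eq_norm_toLp]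
  exact Finset.sum_congr rfl fun ℓ _ => norm_neg (WithLp.toLp 2 fun j => v (ℓ, j))

end BlockVectorNorm

section BlockColumnNorm

variable {ι κ τ d : Type*} [Fintype ι] [Fintype κ] [Fintype τ] [Fintype d] [DecidableEq d]

theorem sum_rho_blk2_le_rhoc (A : Matrix (ι × d) (κ × d) ℂ) (r : κ) :
    ∑ ℓ : ι, rho (blk2 A ℓ r) ≤ rhoc A :=
  le_ciSup (f := fun r => ∑ ℓ : ι, rho (blk2 A ℓ r)) (Set.finite_range _).bddAbove r

theorem rhoc_nonneg (A : Matrix (ι × d) (κ × d) ℂ) : 0 ≤ rhoc A :=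
  Real.iSup_nonneg fun _ => Finset.sum_nonneg fun _ _ => rho_nonneg _

theorem rhoc_le {A : Matrix (ι × d) (κ × d) ℂ} {c : ℝ} (hc : 0 ≤ c)
    (h : ∀ r, ∑ ℓ : ι, rho (blk2 A ℓ r) ≤ c) : rhoc A ≤ c :=
  Real.iSup_le h hc

theorem rhoc_le_card_mul {A : Matrix (ι × d) (κ × d) ℂ} {c : ℝ} (hc : 0 ≤ c)
    (h : ∀ ℓ r, rho (blk2 A ℓ r) ≤ c) : rhoc A ≤ Fintype.card ι * c := by
  refine rhoc_le (by positivity) fun r =>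
    (Finset.sum_le_card_nsmul _ _ _ fun ℓ _ => h ℓ r).trans_eq
      (by rw [nsmul_eq_mul, Finset.card_univ])

theorem rhoc_sub_one_le [DecidableEq ι] {A : Matrix (ι × d) (ι × d) ℂ} {c : ℝ} (hc : 0 ≤ c)
    (hdiag : ∀ ℓ, blk2 A ℓ ℓ = 1) (hoff : ∀ ℓ r, ℓ ≠ r → rho (blk2 A ℓ r) ≤ c) :
    rhoc (A - 1) ≤ (Fintype.card ι - 1 : ℕ) * c := by
  refine rhoc_le (by positivity) fun r => ?_
  rw [← Finset.sum_erase_add _ _ (Finset.mem_univ r), blk2_sub, hdiag, blk2_one, if_pos rfl,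
    sub_self, rho_zero, add_zero, ← Finset.card_univ,
    ← Finset.card_erase_of_mem (Finset.mem_univ r)]
  refine (Finset.sum_le_card_nsmul _ _ _ fun ℓ hℓ => ?_).trans (nsmul_eq_mul _ _).le
  have hne := Finset.ne_of_mem_erase hℓ
  rw [blk2_sub, blk2_one, if_neg hne, sub_zero]
  exact hoff ℓ r hne

theorem rhoc_mul_le (X : Matrix (ι × d) (τ × d) ℂ) (Y : Matrix (τ × d) (κ × d) ℂ) :
    rhoc (X * Y) ≤ rhoc X * rhoc Y := by
  refine rhoc_le (mul_nonneg (rhoc_nonneg X) (rhoc_nonneg Y)) fun r => ?_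
  calc ∑ ℓ : ι, rho (blk2 (X * Y) ℓ r)
      ≤ ∑ ℓ : ι, ∑ t : τ, rho (blk2 X ℓ t) * rho (blk2 Y t r) := by
        refine Finset.sum_le_sum fun ℓ _ => ?_
        rw [blk2_mul]
        exact (rho_sum_le _ _).trans (Finset.sum_le_sum fun t _ => rho_mul_le _ _)
    _ = ∑ t : τ, (∑ ℓ : ι, rho (blk2 X ℓ t)) * rho (blk2 Y t r) := by
        rw [Finset.sum_comm]
        simp only [Finset.sum_mul]
    _ ≤ ∑ t : τ, rhoc X * rho (blk2 Y t r) :=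
        Finset.sum_le_sum fun t _ =>
          mul_le_mul_of_nonneg_right (sum_rho_blk2_le_rhoc X t) (rho_nonneg _)
    _ ≤ rhoc X * rhoc Y := by
        rw [← Finset.mul_sum]
        exact mul_le_mul_of_nonneg_left (sum_rho_blk2_le_rhoc Y r) (rhoc_nonneg X)

theorem rhoc_sub_le (X Y : Matrix (ι × d) (κ × d) ℂ) : rhoc (X - Y) ≤ rhoc X + rhoc Y := by
  refine rhoc_le (add_nonneg (rhoc_nonneg X) (rhoc_nonneg Y)) fun r => ?_
  calc ∑ ℓ : ι, rho (blk2 (X - Y) ℓ r)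
      ≤ ∑ ℓ : ι, (rho (blk2 X ℓ r) + rho (blk2 Y ℓ r)) :=
        Finset.sum_le_sum fun ℓ _ => rho_sub_le _ _
    _ ≤ rhoc X + rhoc Y := by
        rw [Finset.sum_add_distrib]
        exact add_le_add (sum_rho_blk2_le_rhoc X r) (sum_rho_blk2_le_rhoc Y r)

theorem rhoc_one_le [DecidableEq ι] : rhoc (1 : Matrix (ι × d) (ι × d) ℂ) ≤ 1 := by
  refine rhoc_le zero_le_one fun r => ?_
  simp only [blk2_one, apply_ite rho, rho_zero, Finset.sum_ite_eq', Finset.mem_univ, if_true]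
  exact rho_one_le

theorem vnorm1_mulVec_le (A : Matrix (ι × d) (κ × d) ℂ) (x : κ × d → ℂ) :
    vnorm1 (A *ᵥ x) ≤ rhoc A * vnorm1 x := by
  have hblock (ℓ : ι) : (fun j => (A *ᵥ x) (ℓ, j))
      = ∑ r : κ, blk2 A ℓ r *ᵥ fun s => x (r, s) := by
    funext j
    simp [Matrix.mulVec, dotProduct, blk2, Fintype.sum_prod_type, Finset.sum_apply]
  calc vnorm1 (A *ᵥ x)
      ≤ ∑ ℓ : ι, ∑ r : κ, rho (blk2 A ℓ r) * _root_.enorm (fun s => x (r, s)) := by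
        refine Finset.sum_le_sum fun ℓ _ => ?_
        rw [hblock, enorm_eq_norm_toLp, WithLp.toLp_sum]
        refine (norm_sum_le _ _).trans (Finset.sum_le_sum fun r _ => ?_)
        rw [← enorm_eq_norm_toLp]
        exact enorm_mulVec_le _ _
    _ = ∑ r : κ, (∑ ℓ : ι, rho (blk2 A ℓ r)) * _root_.enorm (fun s => x (r, s)) := by
        rw [Finset.sum_comm]
        simp only [Finset.sum_mul]
    _ ≤ rhoc A * vnorm1 x := by
        rw [vnorm1, Finset.mul_sum]
        exact Finset.sum_le_sum fun r _ =>
          mul_le_mul_of_nonneg_right (sum_rho_blk2_le_rhoc A r) (Real.sqrt_nonneg _)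

end BlockColumnNorm

section Inverse

variable {ι d : Type*} [Fintype ι] [Fintype d] [DecidableEq ι] [DecidableEq d]

/-- A kernel vector of `A` is fixed by `-(A - 1)`, a strict contraction of the block `ℓ¹` norm. -/
theorem isUnit_det_of_rhoc_sub_one_lt_one {A : Matrix (ι × d) (ι × d) ℂ}
    (h : rhoc (A - 1) < 1) : IsUnit A.det := by
  rw [isUnit_iff_ne_zero]
  intro hdet
  obtain ⟨v, hv, hAv⟩ := Matrix.exists_mulVec_eq_zero_iff.mpr hdet
  have hfix : (A - 1) *ᵥ v = -v := by
    rw [Matrix.sub_mulVec, hAv, Matrix.one_mulVec, zero_sub]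
  have hle : vnorm1 v ≤ rhoc (A - 1) * vnorm1 v := by
    calc vnorm1 v = vnorm1 ((A - 1) *ᵥ v) := by rw [hfix, vnorm1_neg]
      _ ≤ rhoc (A - 1) * vnorm1 v := vnorm1_mulVec_le _ _
  exact hv (vnorm1_eq_zero (by nlinarith [vnorm1_nonneg v]))

theorem rhoc_nonsing_inv_le {A : Matrix (ι × d) (ι × d) ℂ} (h : rhoc (A - 1) < 1) :
    rhoc A⁻¹ ≤ (1 - rhoc (A - 1))⁻¹ := by
  have hinv : A⁻¹ = 1 - (A - 1) * A⁻¹ := by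
    rw [sub_mul, Matrix.mul_nonsing_inv A (isUnit_det_of_rhoc_sub_one_lt_one h), one_mul,
      sub_sub_cancel]
  have hle : rhoc A⁻¹ ≤ 1 + rhoc (A - 1) * rhoc A⁻¹ :=
    calc rhoc A⁻¹ = rhoc (1 - (A - 1) * A⁻¹) := by rw [← hinv]
      _ ≤ 1 + rhoc (A - 1) * rhoc A⁻¹ :=
        (rhoc_sub_le _ _).trans (add_le_add rhoc_one_le (rhoc_mul_le _ _))
  rw [← one_div (1 - _), le_div_iff₀ (sub_pos.mpr h)]
  nlinarith

end Inverse

theorem rhoc_pinv_mul_lt_one {α ι κ d : Type*} [Fintype α] [Fintype ι] [Fintype κ] [Fintype d]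
    [DecidableEq ι] [DecidableEq d] (D₀ : Matrix α (ι × d) ℂ) (D₁ : Matrix α (κ × d) ℂ)
    (h : rhoc (D₀ᴴ * D₀ - 1) + rhoc (D₀ᴴ * D₁) < 1) : rhoc (pinv D₀ * D₁) < 1 := by
  have hgram : rhoc (D₀ᴴ * D₀ - 1) < 1 := by linarith [rhoc_nonneg (D₀ᴴ * D₁)]
  have hpos : 0 < 1 - rhoc (D₀ᴴ * D₀ - 1) := sub_pos.mpr hgram
  calc rhoc (pinv D₀ * D₁) = rhoc ((D₀ᴴ * D₀)⁻¹ * (D₀ᴴ * D₁)) := by rw [pinv, Matrix.mul_assoc]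
    _ ≤ rhoc (D₀ᴴ * D₀)⁻¹ * rhoc (D₀ᴴ * D₁) := rhoc_mul_le _ _
    _ ≤ (1 - rhoc (D₀ᴴ * D₀ - 1))⁻¹ * rhoc (D₀ᴴ * D₁) :=
        mul_le_mul_of_nonneg_right (rhoc_nonsing_inv_le hgram) (rhoc_nonneg _)
    _ < 1 := by
        rw [← div_eq_inv_mul, div_lt_one hpos]
        linarith

section Coherence

variable {L M d : ℕ} (D : Matrix (Fin L) (Fin M × Fin d) ℂ)

/-- `blockCols D S` is the paper's `D₀`; over the blocks missed by `S` it is `D̄₀`. -/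
def blockCols {ι : Type*} (f : ι → Fin M) : Matrix (Fin L) (ι × Fin d) ℂ :=
  Matrix.of fun i p => D i (f p.1, p.2)

theorem blk2_conjTranspose_mul_blockCols {ι κ : Type*} (f : ι → Fin M) (g : κ → Fin M)
    (t : ι) (u : κ) :
    blk2 ((blockCols D f)ᴴ * blockCols D g) t u = (blk D (f t))ᴴ * blk D (g u) := by
  ext i j
  simp [blockCols, blk2, blk, Matrix.mul_apply, Matrix.conjTranspose_apply]

theorem muB_nonneg : 0 ≤ muB D :=
  Real.iSup_nonneg fun _ => mul_nonneg (by positivity) (rho_nonneg _)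

theorem rho_conjTranspose_mul_blk_le_muB (hd : 0 < d) {ℓ r : Fin M} (hne : ℓ ≠ r) :
    rho ((blk D ℓ)ᴴ * blk D r) ≤ d * muB D := by
  have hle : (1 / (d : ℝ)) * rho ((blk D ℓ)ᴴ * blk D r) ≤ muB D :=
    le_ciSup (f := fun p : {p : Fin M × Fin M // p.1 ≠ p.2} =>
        (1 / (d : ℝ)) * rho ((blk D p.val.1)ᴴ * blk D p.val.2))
      (Set.finite_range _).bddAbove ⟨(ℓ, r), hne⟩
  rw [one_div, inv_mul_le_iff₀ (by exact_mod_cast hd)] at hle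
  exact hle

theorem rhoc_gram_blockCols_sub_one_le {ι : Type*} [Fintype ι] [DecidableEq ι] (hd : 0 < d)
    (horth : ∀ ℓ, (blk D ℓ)ᴴ * blk D ℓ = 1) {S : ι → Fin M} (hS : Function.Injective S) :
    rhoc ((blockCols D S)ᴴ * blockCols D S - 1) ≤ (Fintype.card ι - 1 : ℕ) * (d * muB D) := by
  refine rhoc_sub_one_le (by positivity [muB_nonneg D]) (fun ℓ => ?_) fun ℓ r hne => ?_
  · rw [blk2_conjTranspose_mul_blockCols, horth]
  · rw [blk2_conjTranspose_mul_blockCols]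
    exact rho_conjTranspose_mul_blk_le_muB D hd (hS.ne hne)

theorem rhoc_blockCols_cross_le {ι κ : Type*} [Fintype ι] [Fintype κ] (hd : 0 < d)
    {S : ι → Fin M} {T : κ → Fin M} (hST : ∀ t u, S t ≠ T u) :
    rhoc ((blockCols D S)ᴴ * blockCols D T) ≤ Fintype.card ι * (d * muB D) := by
  refine rhoc_le_card_mul (by positivity [muB_nonneg D]) fun t u => ?_
  rw [blk2_conjTranspose_mul_blockCols]
  exact rho_conjTranspose_mul_blk_le_muB D hd (hST t u)

end Coherence

theorem block_coherence_condition_implies_erc (L M d k : ℕ) (hd : 0 < d) (hk : 1 ≤ k)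
    (D : Matrix (Fin L) (Fin M × Fin d) ℂ)
    (horth : ∀ ℓ : Fin M, (blk D ℓ)ᴴ * blk D ℓ = 1)
    (hmu : 0 < muB D)
    (hcond : (k * d : ℝ) < ((muB D)⁻¹ + d) / 2)
    (S : Fin k → Fin M) (hS : Function.Injective S) :
    rhoc
      ((pinv (Matrix.of fun i (p : Fin k × Fin d) => D i (S p.1, p.2))) *
        Matrix.of fun i (p : {ℓ : Fin M // ∀ j, S j ≠ ℓ} × Fin d) => D i (p.1.val, p.2)) < 1 := by
  have hgram := rhoc_gram_blockCols_sub_one_le D hd horth hS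
  have hcross := rhoc_blockCols_cross_le D hd (S := S)
    (T := ((↑) : {ℓ : Fin M // ∀ j, S j ≠ ℓ} → Fin M)) fun t r => r.2 t
  rw [Fintype.card_fin, Nat.cast_sub hk, Nat.cast_one] at hgram
  rw [Fintype.card_fin] at hcross
  have hcoh : (2 * k - 1) * (d * muB D) < 1 :=
    calc (2 * k - 1) * (d * muB D) = ((2 * k - 1) * d) * muB D := by ring
      _ < (muB D)⁻¹ * muB D := mul_lt_mul_of_pos_right (by linarith) hmu
      _ = 1 := inv_mul_cancel₀ hmu.ne'
  exact rhoc_pinv_mul_lt_one (blockCols D S) (blockCols D Subtype.val) (by linarith)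
end
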